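/- Fix A, k, σ, γ, η, c > 0, an integer N ≥ 1, an integer q̄ ≥ 1 and T > 0. Set C₀ := A·(ση/k)·(1+σγ/k)^{−k/(σγ)}·(1 − σ²γη/((k+σγ)(k+ση)))^{1+k/(ση)}, Ĉ_N := C₀·e^{(N−1)k/(ση)}·( σγ + (ση+k)/N )/( σγ + ση + k ), C_N := kγησ/(2(Nγ+η)) and C'_N := Ĉ_N·kN/(ση). Let v : [0,T] × {−q̄,…,q̄} → ℝ take strictly negative values, be differentiable in t for each q, and define u(t,q) := (−v(t,q))^{−kN/(ση)}. Then v satisfies ∂ₜv(t,q) + (γη²σ²/(2N(Nγ+η)))·q²·v(t,q) − Ĉ_N·v(t,q)·[ 1_{q>−q̄}·(v(t,q)/v(t,q−1))^{Nk/(ση)} + 1_{q<q̄}·(v(t,q)/v(t,q+1))^{Nk/(ση)} ] = 0 for all t ∈ [0,T) and |q| ≤ q̄, with v(T,q) = −1, if and only if u satisfies the linear system ∂ₜu(t,q) = C_N·q²·u(t,q) − C'_N·( u(t,q+1)·1_{q<q̄} + u(t,q−1)·1_{q>−q̄} ) for all t ∈ [0,T) and |q| ≤ q̄, with u(T,q)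 = 1. -/

import Mathlib

/-!
With `α = kN/(ση)` and `u = (-v)^(-α)`, the chain rule gives `∂ₜu = α u ∂ₜv / (-v)`, and since
`v < 0` the nonlinear ratios become linear ones: `(v(q)/v(q±1))^α = u(q±1)/u(q)`. Multiplying the
equation for `v` at a node by the nonvanishing factor `-α u / v` therefore turns it into the linear
equation for `u` at that node, with `C_N = α γη²σ²/(2N(Nγ+η))` and `C'_N = α Ĉ_N`; the terminal
conditions correspond because `x ↦ x^(-α)` is injective on `[0, ∞)`.
-/

lemma deriv_neg_rpow_neg {f : ℝ → ℝ} {t : ℝ} (hf : DifferentiableAt ℝ f t) (hft : f t < 0)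
    (α : ℝ) :
    deriv (fun s => (-f s) ^ (-α)) t = α * (-f t) ^ (-α) / (-f t) * deriv f t := by
  have hne : -f t ≠ 0 := (neg_pos.2 hft).ne'
  rw [(hf.hasDerivAt.neg.rpow_const (f := fun s => -f s) (p := -α) (Or.inl hne)).deriv,
    Real.rpow_sub_one hne]
  ring

lemma div_rpow_of_neg {x y : ℝ} (hx : x < 0) (hy : y < 0) (α : ℝ) :
    (x / y) ^ α = (-y) ^ (-α) / (-x) ^ (-α) := by
  rw [← neg_div_neg_eq, Real.div_rpow (neg_nonneg.2 hx.le) (neg_nonneg.2 hy.le),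
    Real.rpow_neg (neg_nonneg.2 hx.le), Real.rpow_neg (neg_nonneg.2 hy.le), inv_div_inv]

lemma neg_rpow_neg_eq_one_iff {x α : ℝ} (hx : x < 0) (hα : α ≠ 0) :
    (-x) ^ (-α) = 1 ↔ x = -1 :=
  calc (-x) ^ (-α) = 1 ↔ (-x) ^ (-α) = (1 : ℝ) ^ (-α) := by rw [Real.one_rpow]
    _ ↔ -x = 1 := Real.rpow_left_inj (neg_nonneg.2 hx.le) zero_le_one (neg_ne_zero.2 hα)
    _ ↔ x = -1 := neg_eq_iff_eq_neg

lemma add_mul_sub_mul_div_eq_zero_iff {d B C w u a b α : ℝ} (hw : w ≠ 0) (hu : u ≠ 0)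
    (hα : α ≠ 0) :
    d + B * w - C * w * (a / u + b / u) = 0 ↔
      α * u / (-w) * d = α * B * u - α * C * (b + a) := by
  have hfactor : α * u / (-w) * d - (α * B * u - α * C * (b + a))
      = -(α * u / w) * (d + B * w - C * w * (a / u + b / u)) := by
    field_simp
    ring
  rw [iff_comm, ← sub_eq_zero, hfactor, mul_eq_zero, or_iff_right (by simp [hα, hu, hw])]

lemma hjb_node_iff_linear_node (pm pp : Prop) [Decidable pm] [Decidable pp]
    {α B C B' C' r d w wm wp : ℝ} (hα : α ≠ 0) (hw : w < 0) (hwm : wm < 0) (hwp : wp < 0)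
    (hB' : B' = α * B) (hC' : C' = α * C) :
    d + B * r * w
        - C * w * ((if pm then (w / wm) ^ α else 0) + (if pp then (w / wp) ^ α else 0)) = 0 ↔
      α * (-w) ^ (-α) / (-w) * d = B' * r * (-w) ^ (-α)
        - C' * ((if pp then (-wp) ^ (-α) else 0) + (if pm then (-wm) ^ (-α) else 0)) := by
  have hu : (-w) ^ (-α) ≠ 0 := (Real.rpow_pos_of_pos (neg_pos.2 hw) _).ne'
  have hite : ∀ (p : Prop) [Decidable p] (y : ℝ), y < 0 →
      (if p then (w / y) ^ α else 0) = (if p then (-y) ^ (-α) else 0) / (-w) ^ (-α) :=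
    fun p _ y hy => by rw [ite_div, zero_div, div_rpow_of_neg hw hy]
  rw [hite pm wm hwm, hite pp wp hwp, hB', hC', mul_assoc α B r]
  exact add_mul_sub_mul_div_eq_zero_iff hw.ne hu hα

theorem statement15_general (A k σ γ η T : ℝ) (N : ℕ) (qbar : ℤ)
    (hk : 0 < k) (hσ : 0 < σ) (hη : 0 < η)
    (hN : 1 ≤ N)
    (v : ℝ → ℤ → ℝ)
    (hvneg : ∀ t : ℝ, ∀ q : ℤ, v t q < 0)
    (hvdiff : ∀ q : ℤ, ∀ t : ℝ, DifferentiableAt ℝ (fun s => v s q) t) :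
    letI C₀ : ℝ := A * (σ * η / k) * (1 + σ * γ / k) ^ (-(k / (σ * γ))) *
      (1 - σ ^ 2 * γ * η / ((k + σ * γ) * (k + σ * η))) ^ (1 + k / (σ * η))
    letI ChatN : ℝ := C₀ * Real.exp (((N : ℝ) - 1) * k / (σ * η)) *
      ((σ * γ + (σ * η + k) / (N : ℝ)) / (σ * γ + σ * η + k))
    letI CN : ℝ := k * γ * η * σ / (2 * ((N : ℝ) * γ + η))
    letI CN' : ℝ := ChatN * k * (N : ℝ) / (σ * η)
    letI u : ℝ → ℤ → ℝ := fun t q => (-(v t q)) ^ (-(k * (N : ℝ) / (σ * η)))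
    ((∀ t ∈ Set.Ico (0 : ℝ) T, ∀ q : ℤ, |q| ≤ qbar →
        deriv (fun s => v s q) t
          + (γ * η ^ 2 * σ ^ 2 / (2 * (N : ℝ) * ((N : ℝ) * γ + η))) * (q : ℝ) ^ 2 * v t q
          - ChatN * v t q *
            ((if -qbar < q then (v t q / v t (q - 1)) ^ ((N : ℝ) * k / (σ * η)) else 0)
              + (if q < qbar then (v t q / v t (q + 1)) ^ ((N : ℝ) * k / (σ * η)) else 0)) = 0)
      ∧ (∀ q : ℤ, |q| ≤ qbar → v T q = -1))
    ↔
    ((∀ t ∈ Set.Ico (0 : ℝ) T, ∀ q : ℤ, |q| ≤ qbar →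
        deriv (fun s => u s q) t
          = CN * (q : ℝ) ^ 2 * u t q
            - CN' * ((if q < qbar then u t (q + 1) else 0)
              + (if -qbar < q then u t (q - 1) else 0)))
      ∧ (∀ q : ℤ, |q| ≤ qbar → u T q = 1)) := by
  beta_reduce
  have hNpos : (0 : ℝ) < N := by exact_mod_cast hN
  have hα : k * N / (σ * η) ≠ 0 := by positivity
  have hCN : k * γ * η * σ / (2 * (N * γ + η))
      = k * N / (σ * η) * (γ * η ^ 2 * σ ^ 2 / (2 * N * (N * γ + η))) := by
    field_simp
  rw [show (N : ℝ) * k / (σ * η) = k * N / (σ * η) by ring]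
  refine and_congr (forall₂_congr fun t _ => forall₂_congr fun q _ => ?_)
    (forall₂_congr fun q _ => (neg_rpow_neg_eq_one_iff (hvneg T q) hα).symm)
  rw [deriv_neg_rpow_neg (hvdiff q t) (hvneg t q)]
  exact hjb_node_iff_linear_node _ _ hα (hvneg t q) (hvneg t (q - 1)) (hvneg t (q + 1)) hCN
    (by ring)

/-- linearization of the symmetric `N`-exchange Nash equilibrium HJB system:
`v` (strictly negative, differentiable in time) solves the nonlinear system (edp_v^i) iff
`u = (−v)^{−kN/(ση)}` solves the linear system (linearPDE:Nex) with `u(T,·) = 1`. -/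
theorem statement15 (A k σ γ η c T : ℝ) (N : ℕ) (qbar : ℤ)
    (hA : 0 < A) (hk : 0 < k) (hσ : 0 < σ) (hγ : 0 < γ) (hη : 0 < η) (hc : 0 < c)
    (hN : 1 ≤ N) (hqbar : 1 ≤ qbar) (hT : 0 < T)
    (v : ℝ → ℤ → ℝ)
    (hvneg : ∀ t : ℝ, ∀ q : ℤ, v t q < 0)
    (hvdiff : ∀ q : ℤ, ∀ t : ℝ, DifferentiableAt ℝ (fun s => v s q) t) :
    letI C₀ : ℝ := A * (σ * η / k) * (1 + σ * γ / k) ^ (-(k / (σ * γ))) *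
      (1 - σ ^ 2 * γ * η / ((k + σ * γ) * (k + σ * η))) ^ (1 + k / (σ * η))
    letI ChatN : ℝ := C₀ * Real.exp (((N : ℝ) - 1) * k / (σ * η)) *
      ((σ * γ + (σ * η + k) / (N : ℝ)) / (σ * γ + σ * η + k))
    letI CN : ℝ := k * γ * η * σ / (2 * ((N : ℝ) * γ + η))
    letI CN' : ℝ := ChatN * k * (N : ℝ) / (σ * η)
    letI u : ℝ → ℤ → ℝ := fun t q => (-(v t q)) ^ (-(k * (N : ℝ) / (σ * η)))
    ((∀ t ∈ Set.Ico (0 : ℝ) T, ∀ q : ℤ, |q| ≤ qbar →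
        deriv (fun s => v s q) t
          + (γ * η ^ 2 * σ ^ 2 / (2 * (N : ℝ) * ((N : ℝ) * γ + η))) * (q : ℝ) ^ 2 * v t q
          - ChatN * v t q *
            ((if -qbar < q then (v t q / v t (q - 1)) ^ ((N : ℝ) * k / (σ * η)) else 0)
              + (if q < qbar then (v t q / v t (q + 1)) ^ ((N : ℝ) * k / (σ * η)) else 0)) = 0)
      ∧ (∀ q : ℤ, |q| ≤ qbar → v T q = -1))
    ↔
    ((∀ t ∈ Set.Ico (0 : ℝ) T, ∀ q : ℤ, |q| ≤ qbar →
        deriv (fun s => u s q) t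
          = CN * (q : ℝ) ^ 2 * u t q
            - CN' * ((if q < qbar then u t (q + 1) else 0)
              + (if -qbar < q then u t (q - 1) else 0)))
      ∧ (∀ q : ℤ, |q| ≤ qbar → u T q = 1)) :=
  statement15_general A k σ γ η T N qbar hk hσ hη hN v hvneg hvdiff
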